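/- Let u, v : ℝ × ℝ → ℝ be smooth functions satisfying the A_2 Toda system u_{xy} = -exp(2u - v), v_{xy} = -exp(-u + 2v). Expand the non-commutative operator product (∂ - u_x)(∂ + u_x - v_x)(∂ + v_x) = ∂^3 + I_1 ∂ + I_2, where ∂ = ∂_x. Then ∂_y I_1 = 0 and ∂_y I_2 = 0. -/

import Mathlib

noncomputable section

/-- Partial derivative in the first (x) variable. -/
def dx (f : ℝ × ℝ → ℝ) : ℝ × ℝ → ℝ := fun p => deriv (fun t => f (t, p.2)) p.1

/-- Partial derivative in the second (y) variable. -/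
def dy (f : ℝ × ℝ → ℝ) : ℝ × ℝ → ℝ := fun p => deriv (fun t => f (p.1, t)) p.2

/-- Iterated x-derivative. -/
def dxIter : ℕ → (ℝ × ℝ → ℝ) → (ℝ × ℝ → ℝ)
  | 0, f => f
  | n + 1, f => dx (dxIter n f)

/-- The first-order operator `(∂ + f)` applied to `ψ`. -/
def op (f ψ : ℝ × ℝ → ℝ) : ℝ × ℝ → ℝ := fun p => dx ψ p + f p * ψ p

/-- Composition `(∂ + f₁)(∂ + f₂)⋯(∂ + fₘ) ψ`, applying the rightmost factor first. -/
def opProd : List (ℝ × ℝ → ℝ) → (ℝ × ℝ → ℝ) → (ℝ × ℝ → ℝ)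
  | [], ψ => ψ
  | f :: fs, ψ => op f (opProd fs ψ)

open Real

private lemma sliceX (f : ℝ × ℝ → ℝ) (hf : ContDiff ℝ (⊤ : ℕ∞) f) (c : ℝ) :
    ContDiff ℝ (⊤ : ℕ∞) fun t => f (t, c) := hf.comp (contDiff_id.prodMk contDiff_const)

private lemma sliceY (f : ℝ × ℝ → ℝ) (hf : ContDiff ℝ (⊤ : ℕ∞) f) (c : ℝ) :
    ContDiff ℝ (⊤ : ℕ∞) fun t => f (c, t) := hf.comp (contDiff_const.prodMk contDiff_id)

private lemma hasDerivAt_dx (f : ℝ × ℝ → ℝ) (hf : ContDiff ℝ (⊤ : ℕ∞) f) (p : ℝ × ℝ) :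
    HasDerivAt (fun t => f (t, p.2)) (dx f p) p.1 :=
  ((sliceX f hf p.2).differentiable (by simp) p.1).hasDerivAt

private lemma hasDerivAt_dy (f : ℝ × ℝ → ℝ) (hf : ContDiff ℝ (⊤ : ℕ∞) f) (p : ℝ × ℝ) :
    HasDerivAt (fun t => f (p.1, t)) (dy f p) p.2 :=
  ((sliceY f hf p.1).differentiable (by simp) p.2).hasDerivAt

private lemma dx_eq (f : ℝ × ℝ → ℝ) (hf : ContDiff ℝ (⊤ : ℕ∞) f) (p : ℝ × ℝ) :
    dx f p = fderiv ℝ f p (1, 0) := by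
  obtain ⟨x, y⟩ := p
  have h0 : HasDerivAt (fun t : ℝ => (t, y)) ((1 : ℝ), (0 : ℝ)) x :=
    (hasDerivAt_id x).prodMk (hasDerivAt_const x y)
  have h := (hf.differentiable (by simp) (x, y)).hasFDerivAt.comp_hasDerivAt x h0
  exact (h.congr_deriv rfl).deriv

private lemma dy_eq (f : ℝ × ℝ → ℝ) (hf : ContDiff ℝ (⊤ : ℕ∞) f) (p : ℝ × ℝ) :
    dy f p = fderiv ℝ f p (0, 1) := by
  obtain ⟨x, y⟩ := p
  have h0 : HasDerivAt (fun t : ℝ => (x, t)) ((0 : ℝ), (1 : ℝ)) y :=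
    (hasDerivAt_const y x).prodMk (hasDerivAt_id y)
  have h := (hf.differentiable (by simp) (x, y)).hasFDerivAt.comp_hasDerivAt y h0
  exact (h.congr_deriv rfl).deriv

private lemma contDiff_dx (f : ℝ × ℝ → ℝ) (hf : ContDiff ℝ (⊤ : ℕ∞) f) : ContDiff ℝ (⊤ : ℕ∞) (dx f) := by
  have : dx f = fun p => fderiv ℝ f p (1, 0) := funext (dx_eq f hf)
  rw [this]
  exact (hf.fderiv_right (by simp)).clm_apply contDiff_const

private lemma contDiff_dy (f : ℝ × ℝ → ℝ) (hf : ContDiff ℝ (⊤ : ℕ∞) f) : ContDiff ℝ (⊤ : ℕ∞) (dy f) := by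
  have : dy f = fun p => fderiv ℝ f p (0, 1) := funext (dy_eq f hf)
  rw [this]
  exact (hf.fderiv_right (by simp)).clm_apply contDiff_const

private lemma dydx_fderiv (f : ℝ × ℝ → ℝ) (hf : ContDiff ℝ (⊤ : ℕ∞) f) (p : ℝ × ℝ)
    (w w' : ℝ × ℝ) (g : ℝ × ℝ → ℝ) (hg : g = fun q => fderiv ℝ f q w) :
    fderiv ℝ g p w' = fderiv ℝ (fderiv ℝ f) p w' w := by
  subst hg
  have h2 : HasFDerivAt (fderiv ℝ f) (fderiv ℝ (fderiv ℝ f) p) p :=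
    (((hf.fderiv_right (m := (⊤ : ℕ∞)) (by simp)).differentiable (by simp)) p).hasFDerivAt
  have hc : HasFDerivAt (fun q => fderiv ℝ f q w)
      ((ContinuousLinearMap.apply ℝ ℝ w).comp (fderiv ℝ (fderiv ℝ f) p)) p :=
    ((ContinuousLinearMap.apply ℝ ℝ w).hasFDerivAt).comp p h2
  rw [hc.fderiv]
  rfl

private lemma dy_dx (f : ℝ × ℝ → ℝ) (hf : ContDiff ℝ (⊤ : ℕ∞) f) (p : ℝ × ℝ) :
    dy (dx f) p = dx (dy f) p := by
  rw [dy_eq _ (contDiff_dx f hf) p, dx_eq _ (contDiff_dy f hf) p,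
    dydx_fderiv f hf p (1, 0) (0, 1) (dx f) (funext (dx_eq f hf)),
    dydx_fderiv f hf p (0, 1) (1, 0) (dy f) (funext (dy_eq f hf))]
  exact second_derivative_symmetric (fun q => (hf.differentiable (by simp) q).hasFDerivAt)
    (((hf.fderiv_right (m := (⊤ : ℕ∞)) (by simp)).differentiable (by simp) p).hasFDerivAt) _ _

/-- Expanding `(∂ - u_x)(∂ + u_x - v_x)(∂ + v_x) = ∂³ + I₁ ∂ + I₂` for
smooth solutions of the `A₂` Toda system, the coefficients satisfy `∂_y I₁ = 0 = ∂_y I₂`. -/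
theorem stmt2 (u v I₁ I₂ : ℝ × ℝ → ℝ) (hu : ContDiff ℝ (⊤ : ℕ∞) u) (hv : ContDiff ℝ (⊤ : ℕ∞) v)
    (hueq : ∀ p, dy (dx u) p = -Real.exp (2 * u p - v p))
    (hveq : ∀ p, dy (dx v) p = -Real.exp (-u p + 2 * v p))
    (hexp : ∀ ψ : ℝ × ℝ → ℝ, ContDiff ℝ (⊤ : ℕ∞) ψ → ∀ p,
      opProd [fun q => -dx u q, fun q => dx u q - dx v q, fun q => dx v q] ψ p
        = dxIter 3 ψ p + I₁ p * dxIter 1 ψ p + I₂ p * ψ p) :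
    (∀ p, dy I₁ p = 0) ∧ (∀ p, dy I₂ p = 0) := by
  have ca : ContDiff ℝ (⊤ : ℕ∞) (dx u) := contDiff_dx u hu
  have cb : ContDiff ℝ (⊤ : ℕ∞) (dx v) := contDiff_dx v hv
  have ca1 : ContDiff ℝ (⊤ : ℕ∞) (dx (dx u)) := contDiff_dx _ ca
  have cb1 : ContDiff ℝ (⊤ : ℕ∞) (dx (dx v)) := contDiff_dx _ cb
  have cb2 : ContDiff ℝ (⊤ : ℕ∞) (dx (dx (dx v))) := contDiff_dx _ cb1
  -- basic x-derivatives
  have done : dx (fun _ : ℝ × ℝ => (1 : ℝ)) = fun _ => 0 := by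
    funext q; simp [dx]
  have dzero : dx (fun _ : ℝ × ℝ => (0 : ℝ)) = fun _ => 0 := by
    funext q; simp [dx]
  have dX : dx (fun q : ℝ × ℝ => q.1) = fun _ => (1 : ℝ) := by
    funext q; simp [dx]
  -- expansion with ψ = 1
  have s1 : op (fun q => dx v q) (fun _ : ℝ × ℝ => (1 : ℝ)) = fun q => dx v q := by
    funext q
    show dx (fun _ : ℝ × ℝ => (1 : ℝ)) q + dx v q * 1 = dx v q
    rw [done]; ring
  have hdxP : ∀ p, dx (fun q => dx (dx v) q + (dx u q - dx v q) * dx v q) p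
      = dx (dx (dx v)) p
        + ((dx (dx u) p - dx (dx v) p) * dx v p + (dx u p - dx v p) * dx (dx v) p) :=
    fun p => ((hasDerivAt_dx _ cb1 p).add
      (((hasDerivAt_dx _ ca p).sub (hasDerivAt_dx _ cb p)).mul (hasDerivAt_dx _ cb p))).deriv
  have hI2 : ∀ p, I₂ p = dx (dx (dx v)) p
      + ((dx (dx u) p - dx (dx v) p) * dx v p + (dx u p - dx v p) * dx (dx v) p)
      + -dx u p * (dx (dx v) p + (dx u p - dx v p) * dx v p) := by
    intro p
    have h := hexp (fun _ => 1) contDiff_const p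
    have z3 : dxIter 3 (fun _ : ℝ × ℝ => (1 : ℝ)) p = 0 := by
      show dx (dx (dx (fun _ : ℝ × ℝ => (1 : ℝ)))) p = 0
      rw [done, dzero, dzero]
    have z1 : dxIter 1 (fun _ : ℝ × ℝ => (1 : ℝ)) p = 0 := by
      show dx (fun _ : ℝ × ℝ => (1 : ℝ)) p = 0
      rw [done]
    rw [z3, z1] at h
    rw [show opProd [fun q => -dx u q, fun q => dx u q - dx v q, fun q => dx v q]
          (fun _ => (1 : ℝ))
        = op (fun q => -dx u q) (fun q => dx (dx v) q + (dx u q - dx v q) * dx v q) from by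
      show op _ (op _ (op (fun q => dx v q) (fun _ => (1 : ℝ)))) = _
      rw [s1]; rfl] at h
    rw [show op (fun q => -dx u q) (fun q => dx (dx v) q + (dx u q - dx v q) * dx v q) p
        = dx (fun q => dx (dx v) q + (dx u q - dx v q) * dx v q) p
          + -dx u p * (dx (dx v) p + (dx u p - dx v p) * dx v p) from rfl, hdxP p] at h
    linear_combination -h
  -- expansion with ψ = x
  have sX1 : op (fun q => dx v q) (fun q : ℝ × ℝ => q.1) = fun q => 1 + dx v q * q.1 := by
    funext q
    show dx (fun q : ℝ × ℝ => q.1) q + dx v q * q.1 = 1 + dx v q * q.1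
    rw [dX]
  have hdxQ1 : ∀ q, dx (fun r => 1 + dx v r * r.1) q = 0 + (dx (dx v) q * q.1 + dx v q * 1) :=
    fun q => ((hasDerivAt_const q.1 (1 : ℝ)).add
      ((hasDerivAt_dx _ cb q).mul (hasDerivAt_id q.1))).deriv
  have sX2 : op (fun q => dx u q - dx v q) (fun q => 1 + dx v q * q.1)
      = fun q => dx (dx v) q * q.1 + dx v q + (dx u q - dx v q) * (1 + dx v q * q.1) := by
    funext q
    show dx (fun r => 1 + dx v r * r.1) q + (dx u q - dx v q) * (1 + dx v q * q.1) = _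
    rw [hdxQ1 q]; ring
  have hdxQ2 : ∀ p, dx (fun q => dx (dx v) q * q.1 + dx v q
        + (dx u q - dx v q) * (1 + dx v q * q.1)) p
      = dx (dx (dx v)) p * p.1 + dx (dx v) p * 1 + dx (dx v) p
        + ((dx (dx u) p - dx (dx v) p) * (1 + dx v p * p.1)
          + (dx u p - dx v p) * (0 + (dx (dx v) p * p.1 + dx v p * 1))) :=
    fun p => ((((hasDerivAt_dx _ cb1 p).mul (hasDerivAt_id p.1)).add
        (hasDerivAt_dx _ cb p)).add
      (((hasDerivAt_dx _ ca p).sub (hasDerivAt_dx _ cb p)).mul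
        ((hasDerivAt_const p.1 (1 : ℝ)).add
          ((hasDerivAt_dx _ cb p).mul (hasDerivAt_id p.1))))).deriv
  have hI1 : ∀ p, I₁ p = dx (dx (dx v)) p * p.1 + dx (dx v) p * 1 + dx (dx v) p
      + ((dx (dx u) p - dx (dx v) p) * (1 + dx v p * p.1)
        + (dx u p - dx v p) * (0 + (dx (dx v) p * p.1 + dx v p * 1)))
      + -dx u p * (dx (dx v) p * p.1 + dx v p + (dx u p - dx v p) * (1 + dx v p * p.1))
      - I₂ p * p.1 := by
    intro p
    have h := hexp (fun q => q.1) contDiff_fst p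
    have z3 : dxIter 3 (fun q : ℝ × ℝ => q.1) p = 0 := by
      show dx (dx (dx (fun q : ℝ × ℝ => q.1))) p = 0
      rw [dX, done, dzero]
    have z1 : dxIter 1 (fun q : ℝ × ℝ => q.1) p = 1 := by
      show dx (fun q : ℝ × ℝ => q.1) p = 1
      rw [dX]
    rw [z3, z1] at h
    rw [show opProd [fun q => -dx u q, fun q => dx u q - dx v q, fun q => dx v q]
          (fun q : ℝ × ℝ => q.1)
        = op (fun q => -dx u q) (fun q => dx (dx v) q * q.1 + dx v q
            + (dx u q - dx v q) * (1 + dx v q * q.1)) from by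
      show op _ (op _ (op (fun q => dx v q) (fun q : ℝ × ℝ => q.1))) = _
      rw [sX1, sX2]] at h
    rw [show op (fun q => -dx u q) (fun q => dx (dx v) q * q.1 + dx v q
          + (dx u q - dx v q) * (1 + dx v q * q.1)) p
        = dx (fun q => dx (dx v) q * q.1 + dx v q
            + (dx u q - dx v q) * (1 + dx v q * q.1)) p
          + -dx u p * (dx (dx v) p * p.1 + dx v p
            + (dx u p - dx v p) * (1 + dx v p * p.1)) from rfl, hdxQ2 p] at h
    linear_combination -h
  -- conserved densities
  have hJ2fun : I₂ = fun q => dx (dx (dx v)) q + dx (dx u) q * dx v q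
      - 2 * (dx v q * dx (dx v) q) - dx u q * dx u q * dx v q
      + dx u q * (dx v q * dx v q) := by
    funext p; rw [hI2 p]; ring
  have hJ1fun : I₁ = fun q => dx (dx u) q + dx (dx v) q
      - (dx u q * dx u q - dx u q * dx v q + dx v q * dx v q) := by
    funext p; rw [hI1 p, hI2 p]; ring
  -- y-derivatives from the Toda equations
  have hya1 : ∀ p, dy (dx (dx u)) p = -(Real.exp (2 * u p - v p) * (2 * dx u p - dx v p)) := by
    intro p
    rw [dy_dx (dx u) ca p,
      show dy (dx u) = fun q => -Real.exp (2 * u q - v q) from funext hueq]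
    exact ((((hasDerivAt_dx u hu p).const_mul 2).sub (hasDerivAt_dx v hv p)).exp).neg.deriv
  have hyb1 : ∀ p, dy (dx (dx v)) p
      = -(Real.exp (-u p + 2 * v p) * (-dx u p + 2 * dx v p)) := by
    intro p
    rw [dy_dx (dx v) cb p,
      show dy (dx v) = fun q => -Real.exp (-u q + 2 * v q) from funext hveq]
    exact (((hasDerivAt_dx u hu p).neg.add ((hasDerivAt_dx v hv p).const_mul 2)).exp).neg.deriv
  have hyb2 : ∀ p, dy (dx (dx (dx v))) p
      = -(Real.exp (-u p + 2 * v p) * (-dx u p + 2 * dx v p) * (-dx u p + 2 * dx v p)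
          + Real.exp (-u p + 2 * v p) * (-dx (dx u) p + 2 * dx (dx v) p)) := by
    intro p
    rw [dy_dx (dx (dx v)) cb1 p,
      show dy (dx (dx v)) = fun q => -(Real.exp (-u q + 2 * v q) * (-dx u q + 2 * dx v q))
        from funext hyb1]
    exact ((((hasDerivAt_dx u hu p).neg.add
        ((hasDerivAt_dx v hv p).const_mul 2)).exp).mul
      ((hasDerivAt_dx (dx u) ca p).neg.add
        ((hasDerivAt_dx (dx v) cb p).const_mul 2))).neg.deriv
  -- conservation laws
  have keyJ1 : ∀ p, dy (fun q => dx (dx u) q + dx (dx v) q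
      - (dx u q * dx u q - dx u q * dx v q + dx v q * dx v q)) p = 0 := by
    intro p
    have hd : dy (fun q => dx (dx u) q + dx (dx v) q
        - (dx u q * dx u q - dx u q * dx v q + dx v q * dx v q)) p
        = dy (dx (dx u)) p + dy (dx (dx v)) p
          - ((dy (dx u) p * dx u p + dx u p * dy (dx u) p)
            - (dy (dx u) p * dx v p + dx u p * dy (dx v) p)
            + (dy (dx v) p * dx v p + dx v p * dy (dx v) p)) :=
      (((hasDerivAt_dy _ ca1 p).add (hasDerivAt_dy _ cb1 p)).sub
        ((((hasDerivAt_dy _ ca p).mul (hasDerivAt_dy _ ca p)).sub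
          ((hasDerivAt_dy _ ca p).mul (hasDerivAt_dy _ cb p))).add
          ((hasDerivAt_dy _ cb p).mul (hasDerivAt_dy _ cb p)))).deriv
    rw [hd, hya1, hyb1, hueq, hveq]; ring
  have keyJ2 : ∀ p, dy (fun q => dx (dx (dx v)) q + dx (dx u) q * dx v q
      - 2 * (dx v q * dx (dx v) q) - dx u q * dx u q * dx v q
      + dx u q * (dx v q * dx v q)) p = 0 := by
    intro p
    have hd : dy (fun q => dx (dx (dx v)) q + dx (dx u) q * dx v q
        - 2 * (dx v q * dx (dx v) q) - dx u q * dx u q * dx v q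
        + dx u q * (dx v q * dx v q)) p
        = dy (dx (dx (dx v))) p + (dy (dx (dx u)) p * dx v p + dx (dx u) p * dy (dx v) p)
          - 2 * (dy (dx v) p * dx (dx v) p + dx v p * dy (dx (dx v)) p)
          - ((dy (dx u) p * dx u p + dx u p * dy (dx u) p) * dx v p
            + dx u p * dx u p * dy (dx v) p)
          + (dy (dx u) p * (dx v p * dx v p)
            + dx u p * (dy (dx v) p * dx v p + dx v p * dy (dx v) p)) :=
      (((((hasDerivAt_dy _ cb2 p).add
            ((hasDerivAt_dy _ ca1 p).mul (hasDerivAt_dy _ cb p))).sub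
          (((hasDerivAt_dy _ cb p).mul (hasDerivAt_dy _ cb1 p)).const_mul 2)).sub
        (((hasDerivAt_dy _ ca p).mul (hasDerivAt_dy _ ca p)).mul
          (hasDerivAt_dy _ cb p))).add
        ((hasDerivAt_dy _ ca p).mul
          ((hasDerivAt_dy _ cb p).mul (hasDerivAt_dy _ cb p)))).deriv
    rw [hd, hyb2, hya1, hyb1, hueq, hveq]; ring
  refine ⟨fun p => ?_, fun p => ?_⟩
  · rw [hJ1fun]; exact keyJ1 p
  · rw [hJ2fun]; exact keyJ2 p
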